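/- arXiv:cs/9811015 — 2 statements merged into one kernel-verified Lean document; each statement's English description precedes it below -/
import Mathlib

section
/- For every type expression M over parameterised regular type definitions Δ (built from type constructors in Π, ⊤, ⊥, and the set operators ∧, ∨, ¬), the denotation ⟦M⟧ is a regular term language over Σ, i.e., is recognisable by a finite tree automaton. -/
/-!
Fix a finite set `S` of type expressions that contains `M` and is closed under the
sub-expressions that `mem` consults: the operands of `∧`, `∨`, `¬`, and the instantiated
arguments of every rule applicable to some `c(E₁,…,Eₘ) ∈ S`. For such `S`, whether
`f(t₁,…,tₙ) ∈ ⟦E⟧` for `E ∈ S` depends only on `f` and on the `S`-types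
`{E ∈ S | tᵢ ∈ ⟦E⟧}` of the arguments. So the `S`-type of a term is computed bottom-up by an
automaton whose states are the subsets of `S`, and `⟦M⟧` consists of the well-formed terms
whose type contains `M`.

A suitable `S` consists of `⊤`, the sub-expressions of `M`, and the instances of rule
arguments with parameters among these: such an instance is a parameter or `d(E₁,…,E_k)` with
`k` fixed by the rule, and the `Eᵢ` are again parameters, so nothing new arises.
-/

/-- Ground terms over a ranked alphabet `F`. -/
inductive Tm (F : Type) : Type
  | app : F → List (Tm F) → Tm F

/-- Type expressions over type constructors `C`, built from constructors, `⊤`,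
`⊥` and the set operators `∧`, `∨`, `¬`. -/
inductive TE (C : Type) : Type
  | top : TE C
  | bot : TE C
  | con : C → List (TE C) → TE C
  | and : TE C → TE C → TE C
  | or : TE C → TE C → TE C
  | not : TE C → TE C

/-- An argument of the right-hand side of a simplified type rule: a type
parameter `ζᵢ` or a constructor applied to type parameters `d(ζ'₁,…,ζ'_k)`. -/
inductive Arg (C : Type) : Type
  | param : ℕ → Arg C
  | con : C → List ℕ → Arg C

/-- A simplified parametric type rule `c(ζ₁,…,ζₘ) → f(τ₁,…,τₙ)`. -/
structure Rule (C F : Type) where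
  c : C
  f : F
  args : List (Arg C)

/-- Instantiation of a rule argument under a type valuation `Es`. -/
def substArg {C : Type} (a : Arg C) (Es : List (TE C)) : TE C :=
  match a with
  | .param i => Es.getD i .top
  | .con d is => .con d (is.map fun i => Es.getD i .top)

/-- `mem Δ t E` means `t ∈ ⟦E⟧`: `⟦⊤⟧` is all terms, `⟦⊥⟧ = ∅`, the set operators
are interpreted as usual, and `⟦c(E₁,…,Eₘ)⟧` is the union, over ground instances
of the rules of `Δ` with left-hand side `c(E₁,…,Eₘ)`, of
`{f(t₁,…,tₙ) | tᵢ ∈ ⟦τᵢ⟧}` where the `τᵢ` are the instantiated rule arguments. -/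
def mem {C F : Type} (Δ : List (Rule C F)) : Tm F → TE C → Prop
  | _, .top => True
  | _, .bot => False
  | t, .and a b => mem Δ t a ∧ mem Δ t b
  | t, .or a b => mem Δ t a ∨ mem Δ t b
  | t, .not a => ¬ mem Δ t a
  | .app f ts, .con c Es =>
      ∃ r ∈ Δ, r.c = c ∧ r.f = f ∧ r.args.length = ts.length ∧
        ∀ p ∈ ts.zip (r.args.map (substArg · Es)), mem Δ p.1 p.2
  termination_by t E => (sizeOf t, sizeOf E)
  decreasing_by
    all_goals simp_wf
    · exact Prod.Lex.right _ (by omega)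
    · exact Prod.Lex.right _ (by omega)
    · exact Prod.Lex.right _ (by omega)
    · exact Prod.Lex.right _ (by omega)
    · exact Prod.Lex.right _ (by omega)
    · exact Prod.Lex.left _ _ (by
        have hmem : p.1 ∈ ts := (List.of_mem_zip (by assumption)).1
        have := List.sizeOf_lt_of_mem hmem
        omega)

/-- Well-formed ground terms over the ranked alphabet `F`: every function symbol
is applied to a number of arguments equal to its arity. -/
inductive WF {F : Type} (ar : F → ℕ) : Tm F → Prop
  | app {f : F} {ts : List (Tm F)} :
      ts.length = ar f → (∀ t ∈ ts, WF ar t) → WF ar (.app f ts)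

/-- A (bottom-up) run of a tree automaton with transition relation `δ`:
`Reach δ t q` holds if the automaton can reach state `q` at the root of `t`. -/
inductive Reach {F Q : Type} (δ : F → List Q → Q → Prop) : Tm F → Q → Prop
  | app {f : F} {ts : List (Tm F)} {qs : List Q} {q : Q} :
      ts.length = qs.length → (∀ p ∈ ts.zip qs, Reach δ p.1 p.2) →
      δ f qs q → Reach δ (.app f ts) q

/-- A set of ground terms is a regular term language if it is recognised by a
finite (bottom-up) tree automaton: finitely many states `Q`, an arity-respecting
transition relation `δ`, and a set of final states. -/
def Regular {F : Type} (ar : F → ℕ) (L : Set (Tm F)) : Prop :=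
  ∃ (Q : Type) (_ : Finite Q) (δ : F → List Q → Q → Prop) (final : Set Q),
    (∀ f qs q, δ f qs q → qs.length = ar f) ∧
    ∀ t, t ∈ L ↔ ∃ q ∈ final, Reach δ t q

theorem List.getD_mem_of_forall_mem {α : Type*} {l : List α} {s : Set α} {d : α}
    (hl : ∀ x ∈ l, x ∈ s) (hd : d ∈ s) (i : ℕ) : l.getD i d ∈ s := by
  rw [List.getD_eq_getElem?_getD]
  cases h : l[i]? with
  | none => exact hd
  | some x => exact hl x (List.mem_of_getElem? h)

theorem Set.Finite.setOf_length_eq_forall_mem {α : Type*} {s : Set α} (hs : s.Finite) (n : ℕ) :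
    {l : List α | l.length = n ∧ ∀ x ∈ l, x ∈ s}.Finite := by
  have := hs.to_subtype
  refine ((List.finite_length_eq s n).image (List.map Subtype.val)).subset ?_
  rintro l ⟨rfl, hl⟩
  lift l to List s using hl
  exact ⟨l, by simp, rfl⟩

namespace TE

variable {C : Type}

def subexprs : TE C → List (TE C)
  | .top => [.top]
  | .bot => [.bot]
  | .con c Es => .con c Es :: Es.flatMap fun E => E.subexprs
  | .and a b => .and a b :: (a.subexprs ++ b.subexprs)
  | .or a b => .or a b :: (a.subexprs ++ b.subexprs)
  | .not a => .not a :: a.subexprs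

@[simp]
theorem mem_subexprs_self (E : TE C) : E ∈ E.subexprs := by
  cases E <;> simp [subexprs]

theorem subexprs_subset_of_mem : ∀ {E E' : TE C}, E' ∈ E.subexprs → E'.subexprs ⊆ E.subexprs
  | .top, _, h | .bot, _, h => by simp_all [subexprs]
  | .con c Es, E', h => by
    simp only [subexprs, List.mem_cons, List.mem_flatMap] at h
    rcases h with rfl | ⟨E, hE, h⟩
    · exact List.Subset.refl _
    · exact List.Subset.trans (subexprs_subset_of_mem h) fun x hx => by
        simp only [subexprs, List.mem_cons, List.mem_flatMap]
        exact .inr ⟨E, hE, hx⟩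
  | .and a b, E', h | .or a b, E', h => by
    simp only [subexprs, List.mem_cons, List.mem_append] at h
    rcases h with rfl | h | h
    · exact List.Subset.refl _
    · exact List.Subset.trans (subexprs_subset_of_mem h) fun x hx => by simp [subexprs, hx]
    · exact List.Subset.trans (subexprs_subset_of_mem h) fun x hx => by simp [subexprs, hx]
  | .not a, E', h => by
    simp only [subexprs, List.mem_cons] at h
    rcases h with rfl | h
    · exact List.Subset.refl _
    · exact List.Subset.trans (subexprs_subset_of_mem h) fun x hx => by simp [subexprs, hx]

end TE

section Automaton

variable {F Q : Type} (ar : F → ℕ) (τ : Tm F → Q)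

-- The target state is read off any argument list realising `qs`; when `τ` is a congruence
-- (`wf_and_eq_of_reach_congrDelta`) the choice is irrelevant.
def congrDelta (f : F) (qs : List Q) (q : Q) : Prop :=
  qs.length = ar f ∧ ∃ ts : List (Tm F), ts.map τ = qs ∧ τ (.app f ts) = q

variable {ar τ}

theorem reach_congrDelta_of_wf {t : Tm F} (ht : WF ar t) : Reach (congrDelta ar τ) t (τ t) := by
  induction ht with
  | @app f ts hlen _ ih =>
    refine .app (List.length_map _).symm ?_ ⟨by simpa using hlen, ts, rfl, rfl⟩
    have : List.Forall₂ (Reach (congrDelta ar τ)) ts (ts.map τ) := by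
      simpa only [List.forall₂_map_right_iff, List.forall₂_same] using ih
    exact fun p hp => List.forall₂_zip this hp

theorem wf_and_eq_of_reach_congrDelta
    (hτ : ∀ f ts ts', ts.map τ = ts'.map τ → τ (.app f ts) = τ (.app f ts'))
    {t : Tm F} {q : Q} (h : Reach (congrDelta ar τ) t q) : WF ar t ∧ τ t = q := by
  induction h with
  | @app f ts qs q hlen _ hδ ih =>
    obtain ⟨hqs, ts', hts', rfl⟩ := hδ
    have : List.Forall₂ (fun t q => WF ar t ∧ τ t = q) ts qs :=
      List.forall₂_iff_zip.2 ⟨hlen, fun hp => ih (_, _) hp⟩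
    obtain ⟨hwf, hmap⟩ := (List.forall₂_and_left _ _).1 this
    have hmap : ts.map τ = ts'.map τ := by
      rw [hts', ← List.forall₂_eq_eq_eq, List.forall₂_map_left_iff]
      exact hmap
    exact ⟨.app (hlen.trans hqs) hwf, hτ f ts ts' hmap⟩

theorem regular_of_app_congr [Finite Q]
    (hτ : ∀ f ts ts', ts.map τ = ts'.map τ → τ (.app f ts) = τ (.app f ts')) (P : Set Q) :
    Regular ar {t | WF ar t ∧ τ t ∈ P} := by
  refine ⟨Q, inferInstance, congrDelta ar τ, P, fun _ _ _ h => h.1, fun t => ⟨?_, ?_⟩⟩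
  · rintro ⟨ht, hP⟩
    exact ⟨τ t, hP, reach_congrDelta_of_wf ht⟩
  · rintro ⟨q, hP, h⟩
    obtain ⟨ht, rfl⟩ := wf_and_eq_of_reach_congrDelta hτ h
    exact ⟨ht, hP⟩

end Automaton

section Congruence

variable {C F : Type} (Δ : List (Rule C F))

structure IsMemClosed (S : Set (TE C)) : Prop where
  and_mem : ∀ {a b}, TE.and a b ∈ S → a ∈ S ∧ b ∈ S
  or_mem : ∀ {a b}, TE.or a b ∈ S → a ∈ S ∧ b ∈ S
  not_mem : ∀ {a}, TE.not a ∈ S → a ∈ S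
  substArg_mem : ∀ {c Es r a}, TE.con c Es ∈ S → r ∈ Δ → a ∈ r.args → substArg a Es ∈ S

def memType (S : Set (TE C)) (t : Tm F) : Set S := {E | mem Δ t E}

theorem mem_app_con_iff {f : F} {ts : List (Tm F)} {c : C} {Es : List (TE C)} :
    mem Δ (.app f ts) (.con c Es) ↔
      ∃ r ∈ Δ, r.c = c ∧ r.f = f ∧ List.Forall₂ (mem Δ) ts (r.args.map (substArg · Es)) := by
  rw [mem]
  simp only [List.forall₂_iff_zip, List.length_map, Prod.forall, @eq_comm _ ts.length]

variable {Δ} {S : Set (TE C)}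

theorem forall₂_mem_iff_of_map_memType_eq {ts ts' : List (Tm F)}
    (h : ts.map (memType Δ S) = ts'.map (memType Δ S)) {Ls : List (TE C)}
    (hLs : ∀ E ∈ Ls, E ∈ S) :
    List.Forall₂ (mem Δ) ts Ls ↔ List.Forall₂ (mem Δ) ts' Ls := by
  induction ts generalizing ts' Ls with
  | nil => obtain rfl := List.map_eq_nil_iff.1 h.symm; rfl
  | cons t ts ih =>
    obtain _ | ⟨t', ts'⟩ := ts'
    · simp at h
    obtain ⟨ht, hts⟩ := List.cons_eq_cons.1 h
    obtain _ | ⟨E, Ls⟩ := Ls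
    · simp
    rw [List.forall_mem_cons] at hLs
    rw [List.forall₂_cons, List.forall₂_cons, ih hts hLs.2,
      show mem Δ t E ↔ mem Δ t' E from Set.ext_iff.1 ht ⟨E, hLs.1⟩]

theorem IsMemClosed.mem_app_iff (hS : IsMemClosed Δ S) {f : F} {ts ts' : List (Tm F)}
    (h : ts.map (memType Δ S) = ts'.map (memType Δ S)) :
    ∀ E ∈ S, mem Δ (.app f ts) E ↔ mem Δ (.app f ts') E
  | .top, _ | .bot, _ => by simp only [mem]
  | .and a b, hE => by
    simp only [mem, hS.mem_app_iff h a (hS.and_mem hE).1, hS.mem_app_iff h b (hS.and_mem hE).2]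
  | .or a b, hE => by
    simp only [mem, hS.mem_app_iff h a (hS.or_mem hE).1, hS.mem_app_iff h b (hS.or_mem hE).2]
  | .not a, hE => by simp only [mem, hS.mem_app_iff h a (hS.not_mem hE)]
  | .con c Es, hE => by
    simp only [mem_app_con_iff]
    refine exists_congr fun r => and_congr_right fun hr => ?_
    rw [forall₂_mem_iff_of_map_memType_eq h]
    simpa using fun a ha => hS.substArg_mem hE hr ha

theorem IsMemClosed.memType_app_congr (hS : IsMemClosed Δ S) {f : F} {ts ts' : List (Tm F)}
    (h : ts.map (memType Δ S) = ts'.map (memType Δ S)) :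
    memType Δ S (.app f ts) = memType Δ S (.app f ts') :=
  Set.ext fun E => hS.mem_app_iff h E E.2

end Congruence

section Closure

variable {C F : Type}

def argInstances (s : Set (TE C)) (a : Arg C) : Set (TE C) :=
  (substArg a ·) '' {Es | ∀ E ∈ Es, E ∈ s}

theorem mem_or_eq_con_of_mem_argInstances {s : Set (TE C)} (htop : .top ∈ s) {a : Arg C}
    {E : TE C} (hE : E ∈ argInstances s a) :
    E ∈ s ∨ ∃ d Es, (∀ x ∈ Es, x ∈ s) ∧ E = .con d Es := by
  obtain ⟨Es, hEs, rfl⟩ := hE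
  cases a with
  | param i => exact .inl (List.getD_mem_of_forall_mem hEs htop i)
  | con d is =>
    refine .inr ⟨d, _, ?_, rfl⟩
    simpa using fun i _ => List.getD_mem_of_forall_mem hEs htop i

theorem Set.Finite.argInstances {s : Set (TE C)} (hs : s.Finite) (htop : .top ∈ s) (a : Arg C) :
    (argInstances s a).Finite := by
  cases a with
  | param i =>
    refine hs.subset ?_
    rintro _ ⟨Es, hEs, rfl⟩
    exact List.getD_mem_of_forall_mem hEs htop i
  | con d is =>
    refine ((hs.setOf_length_eq_forall_mem is.length).image (TE.con d)).subset ?_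
    rintro _ ⟨Es, hEs, rfl⟩
    refine ⟨_, ⟨List.length_map _, ?_⟩, rfl⟩
    simpa using fun i _ => List.getD_mem_of_forall_mem hEs htop i

def baseExprs (M : TE C) : Set (TE C) := insert .top {E | E ∈ M.subexprs}

theorem mem_baseExprs_of_mem_subexprs {M E E' : TE C} (hE : E ∈ baseExprs M)
    (h : E' ∈ E.subexprs) : E' ∈ baseExprs M := by
  rcases hE with rfl | hE
  · simp_all [TE.subexprs, baseExprs]
  · exact .inr (TE.subexprs_subset_of_mem hE h)

variable (Δ : List (Rule C F))

def closureExprs (M : TE C) : Set (TE C) :=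
  baseExprs M ∪ ⋃ r ∈ Δ, ⋃ a ∈ r.args, argInstances (baseExprs M) a

theorem mem_closureExprs_self (M : TE C) : M ∈ closureExprs Δ M :=
  .inl (.inr (TE.mem_subexprs_self M))

theorem finite_closureExprs (M : TE C) : (closureExprs Δ M).Finite := by
  have hbase : (baseExprs M).Finite := M.subexprs.finite_toSet.insert _
  exact hbase.union <| Δ.finite_toSet.biUnion fun r _ =>
    r.args.finite_toSet.biUnion fun a _ => hbase.argInstances (.inl rfl) a

variable {Δ}

theorem mem_baseExprs_or_eq_con {M E : TE C} (hE : E ∈ closureExprs Δ M) :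
    E ∈ baseExprs M ∨ ∃ d Es, (∀ x ∈ Es, x ∈ baseExprs M) ∧ E = .con d Es := by
  rcases hE with hE | hE
  · exact .inl hE
  · simp only [Set.mem_iUnion] at hE
    obtain ⟨r, _, a, _, hE⟩ := hE
    exact mem_or_eq_con_of_mem_argInstances (.inl rfl) hE

theorem mem_closureExprs_of_mem_subexprs {M E E' : TE C} (hE : E ∈ closureExprs Δ M)
    (hcon : ∀ d Es, E ≠ .con d Es) (h : E' ∈ E.subexprs) : E' ∈ closureExprs Δ M := by
  obtain hE | ⟨d, Es, _, rfl⟩ := mem_baseExprs_or_eq_con hE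
  · exact .inl (mem_baseExprs_of_mem_subexprs hE h)
  · exact absurd rfl (hcon d Es)

theorem isMemClosed_closureExprs (M : TE C) : IsMemClosed Δ (closureExprs Δ M) where
  and_mem hE := ⟨mem_closureExprs_of_mem_subexprs hE (by simp) (by simp [TE.subexprs]),
    mem_closureExprs_of_mem_subexprs hE (by simp) (by simp [TE.subexprs])⟩
  or_mem hE := ⟨mem_closureExprs_of_mem_subexprs hE (by simp) (by simp [TE.subexprs]),
    mem_closureExprs_of_mem_subexprs hE (by simp) (by simp [TE.subexprs])⟩
  not_mem hE := mem_closureExprs_of_mem_subexprs hE (by simp) (by simp [TE.subexprs])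
  substArg_mem {c Es r a} hE hr ha := by
    have hEs : ∀ x ∈ Es, x ∈ baseExprs M := by
      obtain hE | ⟨_, _, hEs, ⟨⟩⟩ := mem_baseExprs_or_eq_con hE
      · refine fun x hx => mem_baseExprs_of_mem_subexprs hE ?_
        simpa [TE.subexprs] using .inr ⟨x, hx, TE.mem_subexprs_self x⟩
      · exact hEs
    exact .inr (Set.mem_biUnion hr (Set.mem_biUnion ha ⟨Es, hEs, rfl⟩))

end Closure

theorem denotation_regular_general {C F : Type} (ar : F → ℕ)
    (Δ : List (Rule C F)) (M : TE C) :
    Regular ar {t : Tm F | WF ar t ∧ mem Δ t M} := by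
  have := (finite_closureExprs Δ M).to_subtype
  simpa [memType] using regular_of_app_congr (ar := ar)
    (fun _ _ _ => (isMemClosed_closureExprs M).memType_app_congr)
    {q | ⟨M, mem_closureExprs_self Δ M⟩ ∈ q}

/-- For every type expression `M` over a finite set `Π = C` of type
constructors and a finite, simplified, type-preserving set `Δ` of parametric
production rules over a finite ranked alphabet `Σ = F`, the denotation `⟦M⟧` (as a set of ground terms over `Σ`, i.e. well-formed terms) is a
regular term language over `Σ`, i.e. recognisable by a finite tree automaton. -/
theorem denotation_regular {C F : Type} [Finite C] [Finite F] (ar : F → ℕ)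
    (Δ : List (Rule C F)) (M : TE C) :
    Regular ar {t : Tm F | WF ar t ∧ mem Δ t M} :=
  denotation_regular_general ar Δ M
end

section
/- The emptiness algorithm etype terminates on every input type expression E₀: the evaluation tree of etype(E₀) is finite, because every conjunctive type expression added to the table has all its type atoms drawn from the finite set rta(E₀), the table grows strictly along each branch (a conjunctive expression subsumed by a tabled one is answered immediately), and hence every branch has length at most 2^{|rta(E₀)|} times a constant, while the branching factor is finite. -/
/-- A type literal: a type atom with a polarity (`true` = positive). -/
abbrev Lit (C : Type) := Bool × TE C

/-- A conjunctive type expression, as its list of literals. -/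
abbrev Conj (C : Type) := List (Lit C)

/-- `t` satisfies the literal `l`. -/
def litMem {C F : Type} (Δ : List (Rule C F)) (l : Lit C) (t : Tm F) : Prop :=
  match l.1 with
  | true => mem Δ t l.2
  | false => ¬ mem Δ t l.2

/-- `⟦C⟧` for a conjunctive type expression: the intersection of the denotations
of its literals. -/
def conjMem {C F : Type} (Δ : List (Rule C F)) (Cj : Conj C) (t : Tm F) : Prop :=
  ∀ l ∈ Cj, litMem Δ l t

/-- Product of two DNFs (conjoining every pair of conjuncts). -/
def prodDnf {α : Type} (l₁ l₂ : List (List α)) : List (List α) :=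
  l₁.flatMap fun c₁ => l₂.map fun c₂ => c₁ ++ c₂

/-- Disjunctive normal form of a type expression (with polarity `pol`;
`dnf E true` is `DNF(E)`, a list of conjunctive type expressions). -/
def dnf {C : Type} : TE C → Bool → List (Conj C)
  | .and a b, true => prodDnf (dnf a true) (dnf b true)
  | .and a b, false => dnf a false ++ dnf b false
  | .or a b, true => dnf a true ++ dnf b true
  | .or a b, false => prodDnf (dnf a false) (dnf b false)
  | .not a, pol => dnf a (!pol)
  | .top, pol => [[(pol, .top)]]
  | .bot, pol => [[(pol, .bot)]]
  | .con c Es, pol => [[(pol, .con c Es)]]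

/-- `pos(C)`: the positive type atoms of a conjunctive type expression. -/
def posC {C : Type} (Cj : Conj C) : List (TE C) :=
  (Cj.filter (·.1)).map (·.2)

/-- `neg(C)`: the complemented type atoms of a conjunctive type expression. -/
def negC {C : Type} (Cj : Conj C) : List (TE C) :=
  (Cj.filter fun l => !l.1).map (·.2)

/-- `A_α^f`: the list of argument sequences `⟨α₁,…,α_k⟩` of the ground rule
instances `α → f(α₁,…,α_k)` in `ground(Δ)` (including `⊤ → f(⊤,…,⊤)`). -/
def Arules {C F : Type} [DecidableEq C] [DecidableEq F] (ar : F → ℕ)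
    (Δ : List (Rule C F)) : TE C → F → List (List (TE C))
  | .con c Es, f =>
      (Δ.filter fun r => decide (r.c = c) && decide (r.f = f)).map
        fun r => r.args.map (substArg · Es)
  | .top, f => [List.replicate (ar f) .top]
  | _, _ => []

/-- `push(¬γ)` for a sequence `γ = ⟨E₁,…,E_k⟩`: the disjunction
`⋁_{l=1}^{k} ⟨⊤,…,⊤,¬E_l,⊤,…,⊤⟩` (for `k = 0`, i.e. `push(¬ε) = Λ`, the empty
disjunction). -/
def pushNegSeq {C : Type} (γ : List (TE C)) : List (List (TE C)) :=
  (List.range γ.length).map fun l =>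
    (List.range γ.length).map fun i => if i = l then TE.not (γ.getD l .top) else TE.top

/-- `B_C^f = (⋀_{ω∈pos(C)} ⋁A_ω^f) ∧ (⋀_{τ∈neg(C)} push(¬(⋁A_τ^f)))`, a
conjunction of disjunctions of sequences (the harmless conjunct `⋁A_⊤^f` realises
the convention that `C` contains at least one positive literal, `⟦⊤∧C⟧=⟦C⟧`). -/
def BCf {C F : Type} [DecidableEq C] [DecidableEq F] (ar : F → ℕ)
    (Δ : List (Rule C F)) (Cj : Conj C) (f : F) : List (List (List (TE C))) :=
  (TE.top :: posC Cj).map (fun ω => Arules ar Δ ω f) ++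
    (negC Cj).flatMap fun τ => (Arules ar Δ τ f).map pushNegSeq

/-- DNF of a conjunction of disjunctions: all ways of choosing one disjunct from
each conjunct (a choice is a conjunctive sequence expression `Γ`). -/
def listProd {α : Type} : List (List α) → List (List α)
  | [] => [[]]
  | l :: ls => l.flatMap fun x => (listProd ls).map (x :: ·)

/-- `Γ↓j`: the conjunction of the `j`-th components of the sequences of a
conjunctive sequence expression `Γ`. -/
def proj {C : Type} (Γ : List (List (TE C))) (j : ℕ) : TE C :=
  (Γ.map fun γ => γ.getD j .top).foldr .and .top

/-- The defining equations of the tabulated emptiness algorithm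
(`et` = etype, `ec` = etype_conj, `es` = eseq, `esc` = eseq_conj; the second
argument is the table `Ψ` of conjunctive type expressions):
* `etype(E,Ψ)` is the conjunction of `etype_conj(C,Ψ)` over `C ∈ DNF(E)`;
* `etype_conj(C,Ψ)` is true if `pos(C) ∩ neg(C) ≠ ∅`, or if some `C' ∈ Ψ`
  subsumes `C` (`lit(C) ⊇ lit(C')`), and otherwise is the conjunction of
  `eseq(B_C^f, Ψ∪{C})` over the `f ∈ ⋂_{α∈pos(C)} F(α)`
  (`F(α) = {f | A_α^f ≠ ∅}`);
* `eseq(Θ,Ψ)` is the conjunction of `eseq_conj(Γ,Ψ)` over `Γ ∈ DNF(Θ)`;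
* `eseq_conj(Γ,Ψ)` of dimension `n ≥ 1` holds iff `etype(Γ↓j,Ψ)` for some
  `1 ≤ j ≤ n`; in dimension `0` it holds iff `Λ ∈ Γ` — in this encoding `Λ`
  (the empty disjunction) is absorbed by `listProd`, which then produces no `Γ`
  at all, so `eseq_conj` receives only `Λ`-free `Γ`'s and returns false in
  dimension `0`. -/
def AlgSpec {C F : Type} [DecidableEq C] [DecidableEq F] (ar : F → ℕ)
    (Δ : List (Rule C F))
    (et : TE C → List (Conj C) → Prop)
    (ec : Conj C → List (Conj C) → Prop)
    (es : List (List (List (TE C))) → List (Conj C) → Prop)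
    (esc : List (List (TE C)) → List (Conj C) → Prop) : Prop :=
  (∀ E Ψ, et E Ψ ↔ ∀ Cj ∈ dnf E true, ec Cj Ψ) ∧
  (∀ Cj Ψ, ec Cj Ψ ↔
      ((∃ E ∈ posC Cj, E ∈ negC Cj) ∨
       (∃ C' ∈ Ψ, ∀ l ∈ C', l ∈ Cj) ∨
       (∀ f : F, (∀ ω ∈ posC Cj, Arules ar Δ ω f ≠ []) →
          es (BCf ar Δ Cj f) (Cj :: Ψ)))) ∧
  (∀ Θ Ψ, es Θ Ψ ↔ ∀ Γ ∈ listProd Θ, esc Γ Ψ) ∧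
  (∀ Γ Ψ, esc Γ Ψ ↔ ∃ j < (Γ.headD []).length, et (proj Γ j) Ψ)

/-- The set of top-level type atoms of a type expression. -/
def tlta {C : Type} : TE C → Set (TE C)
  | .and a b => tlta a ∪ tlta b
  | .or a b => tlta a ∪ tlta b
  | .not a => tlta a
  | .top => {.top}
  | .bot => {.bot}
  | .con c Es => {.con c Es}

/-- `rta(E₀)`: the smallest set of type atoms containing all top-level type atoms
of `E₀` and closed under taking top-level type atoms of the right-hand side
arguments of ground rule instances for atoms already in the set. -/
inductive Rta {C F : Type} (Δ : List (Rule C F)) (E₀ : TE C) : TE C → Prop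
  | base {a : TE C} : a ∈ tlta E₀ → Rta Δ E₀ a
  | step {c : C} {Es : List (TE C)} {r : Rule C F} {arg : Arg C} {a : TE C} :
      Rta Δ E₀ (.con c Es) → r ∈ Δ → r.c = c → arg ∈ r.args →
      a ∈ tlta (substArg arg Es) → Rta Δ E₀ a


namespace Term11

variable {C F : Type}

/-- A custom induction principle for `TE` (no IH needed in the `con` case). -/
lemma te_ind {motive : TE C → Prop} (htop : motive .top) (hbot : motive .bot)
    (hcon : ∀ c Es, motive (.con c Es))
    (hand : ∀ a b, motive a → motive b → motive (.and a b))
    (hor : ∀ a b, motive a → motive b → motive (.or a b))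
    (hnot : ∀ a, motive a → motive (.not a)) : ∀ t, motive t := by
  suffices h : ∀ (n : ℕ) (t : TE C), sizeOf t ≤ n → motive t from
    fun t => h (sizeOf t) t le_rfl
  intro n
  induction n with
  | zero => intro t ht; cases t <;> simp at ht
  | succ n ih =>
    intro t ht
    cases t with
    | top => exact htop
    | bot => exact hbot
    | con c Es => exact hcon c Es
    | and a b => simp at ht; exact hand a b (ih a (by omega)) (ih b (by omega))
    | or a b => simp at ht; exact hor a b (ih a (by omega)) (ih b (by omega))
    | not a => simp at ht; exact hnot a (ih a (by omega))

/-- All subexpressions of a type expression. -/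
def subs : TE C → List (TE C)
  | .top => [.top]
  | .bot => [.bot]
  | .and a b => .and a b :: (subs a ++ subs b)
  | .or a b => .or a b :: (subs a ++ subs b)
  | .not a => .not a :: subs a
  | .con c Es => .con c Es :: Es.attach.flatMap (fun e => subs e.1)
  termination_by t => sizeOf t
  decreasing_by
    all_goals simp_wf <;> try omega
    · have := List.sizeOf_lt_of_mem e.2; omega

lemma subs_self (t : TE C) : t ∈ subs t := by
  cases t <;> simp [subs]

lemma sizeOf_pos (t : TE C) : 0 < sizeOf t := by
  cases t <;> simp

lemma subs_trans_aux : ∀ (n : ℕ) (t : TE C), sizeOf t ≤ n →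
    ∀ u ∈ subs t, ∀ v ∈ subs u, v ∈ subs t := by
  intro n
  induction n with
  | zero => intro t ht; have := sizeOf_pos t; omega
  | succ n ih =>
    intro t ht u hu v hv
    cases t with
    | top => simp [subs] at hu; subst hu; simpa [subs] using hv
    | bot => simp [subs] at hu; subst hu; simpa [subs] using hv
    | con c Es =>
      simp only [subs, List.mem_cons, List.mem_flatMap, List.mem_attach, true_and,
        Subtype.exists] at hu
      rcases hu with rfl | ⟨e, he, hue⟩
      · exact hv
      · have h1 := List.sizeOf_lt_of_mem he
        have hs2 : sizeOf (TE.con c Es) ≤ n + 1 := ht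
        simp only [TE.con.sizeOf_spec] at hs2
        have : v ∈ subs e := ih e (by omega) u hue v hv
        simp only [subs, List.mem_cons, List.mem_flatMap, List.mem_attach, true_and,
          Subtype.exists]
        exact Or.inr ⟨e, he, this⟩
    | and a b =>
      simp only [subs, List.mem_cons, List.mem_append] at hu ⊢
      simp at ht
      rcases hu with rfl | hu | hu
      · simpa [subs] using hv
      · exact Or.inr (Or.inl (ih a (by omega) u hu v hv))
      · exact Or.inr (Or.inr (ih b (by omega) u hu v hv))
    | or a b =>
      simp only [subs, List.mem_cons, List.mem_append] at hu ⊢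
      simp at ht
      rcases hu with rfl | hu | hu
      · simpa [subs] using hv
      · exact Or.inr (Or.inl (ih a (by omega) u hu v hv))
      · exact Or.inr (Or.inr (ih b (by omega) u hu v hv))
    | not a =>
      simp only [subs, List.mem_cons] at hu ⊢
      simp at ht
      rcases hu with rfl | hu
      · simpa [subs] using hv
      · exact Or.inr (ih a (by omega) u hu v hv)

lemma subs_trans {t u v : TE C} (hu : u ∈ subs t) (hv : v ∈ subs u) : v ∈ subs t :=
  subs_trans_aux (sizeOf t) t le_rfl u hu v hv

lemma tlta_subs : ∀ (t : TE C), ∀ a ∈ tlta t, a ∈ subs t := by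
  intro t
  induction t using te_ind with
  | htop => intro a ha; simpa [tlta, subs] using ha
  | hbot => intro a ha; simpa [tlta, subs] using ha
  | hcon c Es => intro a ha; simp only [tlta, Set.mem_singleton_iff] at ha; subst ha; exact subs_self _
  | hand a b iha ihb =>
    intro x hx
    simp only [subs, List.mem_cons, List.mem_append]
    rcases hx with hx | hx
    · exact Or.inr (Or.inl (iha x hx))
    · exact Or.inr (Or.inr (ihb x hx))
  | hor a b iha ihb =>
    intro x hx
    simp only [subs, List.mem_cons, List.mem_append]
    rcases hx with hx | hx
    · exact Or.inr (Or.inl (iha x hx))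
    · exact Or.inr (Or.inr (ihb x hx))
  | hnot a iha =>
    intro x hx
    simp only [subs, List.mem_cons]
    exact Or.inr (iha x hx)

/-- members of `tlta` are atoms. -/
lemma tlta_atom : ∀ (t : TE C), ∀ a ∈ tlta t,
    a = .top ∨ a = .bot ∨ ∃ c Es, a = TE.con c Es := by
  intro t
  induction t using te_ind with
  | htop => intro a ha; simp [tlta] at ha; subst ha; tauto
  | hbot => intro a ha; simp [tlta] at ha; subst ha; tauto
  | hcon c Es => intro a ha; simp [tlta] at ha; subst ha; exact Or.inr (Or.inr ⟨c, Es, rfl⟩)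
  | hand a b iha ihb => intro x hx; rcases hx with hx | hx; exacts [iha x hx, ihb x hx]
  | hor a b iha ihb => intro x hx; rcases hx with hx | hx; exacts [iha x hx, ihb x hx]
  | hnot a iha => exact iha

lemma tlta_self_of_atom {a : TE C}
    (h : a = .top ∨ a = .bot ∨ ∃ c Es, a = TE.con c Es) : tlta a = {a} := by
  rcases h with rfl | rfl | ⟨c, Es, rfl⟩ <;> rfl

lemma tlta_finite (t : TE C) : (tlta t).Finite := by
  induction t using te_ind with
  | htop => exact Set.finite_singleton _
  | hbot => exact Set.finite_singleton _
  | hcon c Es => exact Set.finite_singleton _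
  | hand a b iha ihb => exact iha.union ihb
  | hor a b iha ihb => exact iha.union ihb
  | hnot a iha => exact iha



def argLen : Arg C → ℕ
  | .param _ => 0
  | .con _ is => is.length

def maxArgLen (Δ : List (Rule C F)) : ℕ :=
  ((Δ.flatMap fun r => r.args).map argLen).foldr max 0

lemma le_foldr_max {l : List ℕ} {x : ℕ} (h : x ∈ l) : x ≤ l.foldr max 0 := by
  induction l with
  | nil => simp at h
  | cons a l ih =>
    simp only [List.foldr_cons]
    rcases List.mem_cons.1 h with rfl | h
    · exact le_max_left _ _
    · exact (ih h).trans (le_max_right _ _)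

lemma argLen_le {Δ : List (Rule C F)} {r : Rule C F} {arg : Arg C}
    (hr : r ∈ Δ) (ha : arg ∈ r.args) : argLen arg ≤ maxArgLen Δ := by
  apply le_foldr_max
  simp only [List.mem_map, List.mem_flatMap]
  exact ⟨arg, ⟨r, hr, ha⟩, rfl⟩

def Tset (E₀ : TE C) : Set (TE C) := insert .top {x | x ∈ subs E₀}

def Sbig (Δ : List (Rule C F)) (E₀ : TE C) : Set (TE C) :=
  {a | ∃ t ∈ Tset E₀, a ∈ tlta t} ∪
    {a | ∃ (d : C) (l : List (TE C)), a = .con d l ∧ l.length ≤ maxArgLen Δ ∧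
      ∀ x ∈ l, x ∈ Tset E₀}

lemma getD_mem_or {α : Type*} (l : List α) (i : ℕ) (d : α) :
    l.getD i d = d ∨ l.getD i d ∈ l := by
  rcases lt_or_ge i l.length with h | h
  · right
    rw [List.getD_eq_getElem _ _ h]
    exact List.getElem_mem _
  · left
    exact List.getD_eq_default _ _ h

lemma top_mem_Tset (E₀ : TE C) : TE.top ∈ Tset E₀ := Set.mem_insert _ _

lemma rta_subset_Sbig {Δ : List (Rule C F)} {E₀ a : TE C} (h : Rta Δ E₀ a) :
    a ∈ Sbig Δ E₀ := by
  induction h with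
  | base hb =>
    exact Or.inl ⟨E₀, Or.inr (subs_self E₀), hb⟩
  | @step c Es r arg a hcon hr hrc harg ha ih =>
    have hEsT : ∀ e ∈ Es, e ∈ Tset E₀ := by
      rcases ih with ⟨t, ht, hmem⟩ | ⟨d, l, heq, _, hT⟩
      · rcases ht with rfl | hts
        · simp [tlta] at hmem
        · have hsub : TE.con c Es ∈ subs E₀ := subs_trans hts (tlta_subs t _ hmem)
          intro e he
          have : e ∈ subs (TE.con c Es) := by
            simp only [subs, List.mem_cons, List.mem_flatMap, List.mem_attach, true_and,
              Subtype.exists]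
            exact Or.inr ⟨e, he, subs_self e⟩
          exact Or.inr (subs_trans hsub this)
      · cases heq
        exact hT
    cases arg with
    | param i =>
      have : Es.getD i .top ∈ Tset E₀ := by
        rcases getD_mem_or Es i .top with hd | hd
        · rw [hd]; exact top_mem_Tset E₀
        · exact hEsT _ hd
      exact Or.inl ⟨Es.getD i .top, this, ha⟩
    | con d is =>
      simp only [substArg, tlta, Set.mem_singleton_iff] at ha
      subst ha
      refine Or.inr ⟨d, _, rfl, ?_, ?_⟩
      · rw [List.length_map]
        exact argLen_le hr harg
      · intro x hx
        simp only [List.mem_map] at hx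
        obtain ⟨i, _, rfl⟩ := hx
        rcases getD_mem_or Es i .top with hd | hd
        · rw [hd]; exact top_mem_Tset E₀
        · exact hEsT _ hd

lemma Tset_finite (E₀ : TE C) : (Tset E₀).Finite :=
  ((subs E₀).finite_toSet).insert _

lemma Sbig_finite [Finite C] (Δ : List (Rule C F)) (E₀ : TE C) : (Sbig Δ E₀).Finite := by
  apply Set.Finite.union
  · have : {a | ∃ t ∈ Tset E₀, a ∈ tlta t} = ⋃ t ∈ Tset E₀, tlta t := by
      ext a; simp
    rw [this]
    exact (Tset_finite E₀).biUnion fun t _ => tlta_finite t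
  · have hfinT : Finite ↥(Tset E₀) := (Tset_finite E₀).to_subtype
    have hL : {l : List (TE C) | l.length ≤ maxArgLen Δ ∧ ∀ x ∈ l, x ∈ Tset E₀}.Finite := by
      have himg := ((List.finite_length_le ↥(Tset E₀) (maxArgLen Δ)).image
        (List.map (Subtype.val : ↥(Tset E₀) → TE C)))
      apply himg.subset
      intro l ⟨hlen, hT⟩
      refine ⟨l.attach.map (fun x => (⟨x.1, hT x.1 x.2⟩ : ↥(Tset E₀))), by simpa, ?_⟩
      rw [List.map_map]
      simp
    have : {a : TE C | ∃ (d : C) (l : List (TE C)), a = .con d l ∧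
        l.length ≤ maxArgLen Δ ∧ ∀ x ∈ l, x ∈ Tset E₀} ⊆
        (fun p : C × List (TE C) => TE.con p.1 p.2) ''
          (Set.univ ×ˢ {l : List (TE C) | l.length ≤ maxArgLen Δ ∧ ∀ x ∈ l, x ∈ Tset E₀}) := by
      rintro a ⟨d, l, rfl, hlen, hT⟩
      exact ⟨(d, l), ⟨Set.mem_univ _, hlen, hT⟩, rfl⟩
    exact ((Set.finite_univ.prod hL).image _).subset this

/-- Part 1: the set of relevant type atoms is finite. -/
lemma rta_finite [Finite C] (Δ : List (Rule C F)) (E₀ : TE C) :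
    {a : TE C | Rta Δ E₀ a}.Finite :=
  (Sbig_finite Δ E₀).subset fun _ h => rta_subset_Sbig h



/-! ### The universe of relevant atoms, and the measure -/

def K (Δ : List (Rule C F)) (e : TE C) : Set (TE C) :=
  {a | Rta Δ e a} ∪ {.top, .bot}

lemma K_finite [Finite C] (Δ : List (Rule C F)) (e : TE C) : (K Δ e).Finite :=
  (rta_finite Δ e).union ((Set.finite_singleton _).insert _)

lemma top_mem_K {Δ : List (Rule C F)} {e : TE C} : TE.top ∈ K Δ e :=
  Or.inr (Or.inl rfl)

lemma base_mem_K {Δ : List (Rule C F)} {e a : TE C} (h : a ∈ tlta e) : a ∈ K Δ e :=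
  Or.inl (Rta.base h)

lemma K_mono {Δ : List (Rule C F)} {e e' : TE C}
    (h : ∀ b ∈ tlta e', b ∈ K Δ e) : K Δ e' ⊆ K Δ e := by
  rintro a (ha | ha)
  · induction ha with
    | base hb => exact h _ hb
    | @step c Es r arg a hcon hr hrc harg hta ih =>
      rcases ih with hR | htb
      · exact Or.inl (Rta.step hR hr hrc harg hta)
      · simp at htb
  · exact Or.inr ha

lemma mem_K_of_tlta_tlta {Δ : List (Rule C F)} {e x b : TE C}
    (hx : x ∈ tlta e) (hb : b ∈ tlta x) : b ∈ K Δ e := by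
  rw [tlta_self_of_atom (tlta_atom e x hx)] at hb
  cases hb
  exact base_mem_K hx

/-- the conjunction of the atoms of a conjunctive type expression -/
def conjTE (Cj : Conj C) : TE C := (Cj.map (·.2)).foldr .and .top

def seqTE (Γ : List (List (TE C))) : TE C := (Γ.flatMap id).foldr .and .top

def thTE (Θ : List (List (List (TE C)))) : TE C :=
  ((Θ.flatMap id).flatMap id).foldr .and .top

lemma tlta_foldr {l : List (TE C)} {a : TE C} :
    a ∈ tlta (l.foldr .and .top) ↔ a = .top ∨ ∃ x ∈ l, a ∈ tlta x := by
  induction l with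
  | nil => simp [tlta]
  | cons x l ih =>
    simp only [List.foldr_cons]
    constructor
    · rintro (h | h)
      · exact Or.inr ⟨x, List.mem_cons_self, h⟩
      · rcases ih.1 h with h | ⟨y, hy, hay⟩
        · exact Or.inl h
        · exact Or.inr ⟨y, List.mem_cons_of_mem _ hy, hay⟩
    · rintro (rfl | ⟨y, hy, hay⟩)
      · exact Or.inr (ih.2 (Or.inl rfl))
      · rcases List.mem_cons.1 hy with rfl | hy
        · exact Or.inl hay
        · exact Or.inr (ih.2 (Or.inr ⟨y, hy, hay⟩))

lemma mem_prodDnf {α : Type} {l₁ l₂ : List (List α)} {Cj : List α} :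
    Cj ∈ prodDnf l₁ l₂ ↔ ∃ c₁ ∈ l₁, ∃ c₂ ∈ l₂, Cj = c₁ ++ c₂ := by
  simp [prodDnf, eq_comm]

/-- literals of dnf conjuncts are top-level type atoms -/
lemma dnf_tlta : ∀ (E : TE C), ∀ (pol : Bool), ∀ Cj ∈ dnf E pol, ∀ l ∈ Cj, l.2 ∈ tlta E := by
  intro E
  induction E using te_ind with
  | htop => intro pol Cj hCj l hl; simp [dnf] at hCj; subst hCj; simp at hl; subst hl; simp [tlta]
  | hbot => intro pol Cj hCj l hl; simp [dnf] at hCj; subst hCj; simp at hl; subst hl; simp [tlta]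
  | hcon c Es => intro pol Cj hCj l hl; simp [dnf] at hCj; subst hCj; simp at hl; subst hl; simp [tlta]
  | hand a b iha ihb =>
    intro pol Cj hCj l hl
    cases pol with
    | true =>
      obtain ⟨c₁, h₁, c₂, h₂, rfl⟩ := mem_prodDnf.1 hCj
      rcases List.mem_append.1 hl with h | h
      · exact Or.inl (iha true c₁ h₁ l h)
      · exact Or.inr (ihb true c₂ h₂ l h)
    | false =>
      rcases List.mem_append.1 hCj with h | h
      · exact Or.inl (iha false Cj h l hl)
      · exact Or.inr (ihb false Cj h l hl)
  | hor a b iha ihb =>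
    intro pol Cj hCj l hl
    cases pol with
    | false =>
      obtain ⟨c₁, h₁, c₂, h₂, rfl⟩ := mem_prodDnf.1 hCj
      rcases List.mem_append.1 hl with h | h
      · exact Or.inl (iha false c₁ h₁ l h)
      · exact Or.inr (ihb false c₂ h₂ l h)
    | true =>
      rcases List.mem_append.1 hCj with h | h
      · exact Or.inl (iha true Cj h l hl)
      · exact Or.inr (ihb true Cj h l hl)
  | hnot a iha =>
    intro pol Cj hCj l hl
    exact iha (!pol) Cj hCj l hl

lemma mem_of_mem_listProd {α : Type} :
    ∀ {Θ : List (List α)} {Γ : List α}, Γ ∈ listProd Θ → ∀ γ ∈ Γ, ∃ D ∈ Θ, γ ∈ D := by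
  intro Θ
  induction Θ with
  | nil => intro Γ hΓ γ hγ; simp [listProd] at hΓ; subst hΓ; simp at hγ
  | cons D Θ ih =>
    intro Γ hΓ γ hγ
    simp only [listProd, List.mem_flatMap, List.mem_map] at hΓ
    obtain ⟨x, hx, Γ', hΓ', rfl⟩ := hΓ
    rcases List.mem_cons.1 hγ with rfl | hγ
    · exact ⟨D, List.mem_cons_self, hx⟩
    · obtain ⟨D', hD', hγD'⟩ := ih hΓ' γ hγ
      exact ⟨D', List.mem_cons_of_mem _ hD', hγD'⟩

section
variable [DecidableEq C] [DecidableEq F]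

lemma arules_tlta {ar : F → ℕ} {Δ : List (Rule C F)} {e ω : TE C} {f : F}
    {γ : List (TE C)} {x a : TE C}
    (hγ : γ ∈ Arules ar Δ ω f) (hx : x ∈ γ) (ha : a ∈ tlta x)
    (hω : ∀ c Es, ω = TE.con c Es → Rta Δ e (TE.con c Es)) : a ∈ K Δ e := by
  cases ω with
  | top =>
    simp only [Arules, List.mem_singleton] at hγ
    subst hγ
    have := List.eq_of_mem_replicate hx
    subst this
    simp only [tlta, Set.mem_singleton_iff] at ha
    subst ha
    exact top_mem_K
  | con c Es =>
    simp only [Arules, List.mem_map, List.mem_filter] at hγ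
    obtain ⟨r, ⟨hr, hcf⟩, rfl⟩ := hγ
    simp only [Bool.and_eq_true, decide_eq_true_eq] at hcf
    obtain ⟨arg, harg, rfl⟩ := List.mem_map.1 hx
    exact Or.inl (Rta.step (hω c Es rfl) hr hcf.1 harg ha)
  | bot => simp [Arules] at hγ
  | and a b => simp [Arules] at hγ
  | or a b => simp [Arules] at hγ
  | not a => simp [Arules] at hγ

end

/-! ### Inputs of the algorithm, and the termination measure -/

inductive Inp (C : Type) : Type
  | et : TE C → List (Conj C) → Inp C
  | ec : Conj C → List (Conj C) → Inp C
  | es : List (List (List (TE C))) → List (Conj C) → Inp C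
  | esc : List (List (TE C)) → List (Conj C) → Inp C

def tbl : Inp C → List (Conj C)
  | .et _ Ψ => Ψ
  | .ec _ Ψ => Ψ
  | .es _ Ψ => Ψ
  | .esc _ Ψ => Ψ

def ph : Inp C → ℕ
  | .et _ _ => 1
  | .ec _ _ => 0
  | .es _ _ => 3
  | .esc _ _ => 2

def Uof (Δ : List (Rule C F)) : Inp C → Set (TE C)
  | .et E _ => K Δ E
  | .ec Cj _ => K Δ (conjTE Cj) ∪ {a | ∃ l ∈ Cj, l.2 = a}
  | .es Θ _ => K Δ (thTE Θ)
  | .esc Γ _ => K Δ (seqTE Γ)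

lemma Uof_finite [Finite C] (Δ : List (Rule C F)) (x : Inp C) : (Uof Δ x).Finite := by
  cases x with
  | et E Ψ => exact K_finite Δ E
  | ec Cj Ψ =>
    apply (K_finite Δ (conjTE Cj)).union
    have : {a : TE C | ∃ l ∈ Cj, l.2 = a} = (fun l : Lit C => l.2) '' {l | l ∈ Cj} := by
      ext a; simp [eq_comm]
    rw [this]
    exact (Cj.finite_toSet).image _
  | es Θ Ψ => exact K_finite Δ (thTE Θ)
  | esc Γ Ψ => exact K_finite Δ (seqTE Γ)

/-- The family of literal-sets over the universe `U` that are not yet in the table. -/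
def Fam (U : Set (TE C)) (Ψ : List (Conj C)) : Set (Set (Bool × TE C)) :=
  {S | (∀ l ∈ S, l.2 ∈ U) ∧ ∀ C' ∈ Ψ, {l : Bool × TE C | l ∈ C'} ≠ S}

lemma Fam_finite {U : Set (TE C)} (hU : U.Finite) (Ψ : List (Conj C)) :
    (Fam U Ψ).Finite := by
  apply ((Set.finite_univ.prod hU).finite_subsets).subset
  intro S hS l hl
  exact ⟨trivial, hS.1 l hl⟩

noncomputable def μm (U : Set (TE C)) (Ψ : List (Conj C)) : ℕ := (Fam U Ψ).ncard

lemma μm_le {U U' : Set (TE C)} (hU : U.Finite) (hsub : U' ⊆ U) (Ψ : List (Conj C)) :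
    μm U' Ψ ≤ μm U Ψ :=
  Set.ncard_le_ncard (fun S hS => ⟨fun l hl => hsub (hS.1 l hl), hS.2⟩) (Fam_finite hU Ψ)

lemma μm_lt {U U' : Set (TE C)} {Cj : Conj C} {Ψ : List (Conj C)}
    (hU : U.Finite) (hsub : U' ⊆ U) (hCj : ∀ l ∈ Cj, l.2 ∈ U)
    (hns : ¬ ∃ C' ∈ Ψ, ∀ l ∈ C', l ∈ Cj) : μm U' (Cj :: Ψ) < μm U Ψ := by
  apply Set.ncard_lt_ncard _ (Fam_finite hU Ψ)
  have hsubset : Fam U' (Cj :: Ψ) ⊆ Fam U Ψ := fun S hS =>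
    ⟨fun l hl => hsub (hS.1 l hl), fun C' hC' => hS.2 C' (List.mem_cons_of_mem _ hC')⟩
  refine (Set.ssubset_iff_of_subset hsubset).2 ⟨{l : Bool × TE C | l ∈ Cj}, ?_, ?_⟩
  · refine ⟨hCj, fun C' hC' heq => hns ⟨C', hC', fun l hl => ?_⟩⟩
    have : l ∈ {l : Bool × TE C | l ∈ Cj} := heq ▸ hl
    exact this
  · intro hmem
    exact hmem.2 Cj (List.mem_cons_self) rfl

noncomputable def meas (Δ : List (Rule C F)) (x : Inp C) : ℕ :=
  4 * μm (Uof Δ x) (tbl x) + ph x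

/-! ### Inclusion lemmas between the universes along recursive calls -/

lemma K_conjTE_le {Δ : List (Rule C F)} {Cj : Conj C} {E : TE C}
    (h : ∀ l ∈ Cj, l.2 ∈ tlta E) : K Δ (conjTE Cj) ⊆ K Δ E := by
  apply K_mono
  intro b hb
  rcases tlta_foldr.1 hb with rfl | ⟨x, hx, hbx⟩
  · exact top_mem_K
  · obtain ⟨l, hl, rfl⟩ := List.mem_map.1 hx
    exact mem_K_of_tlta_tlta (h l hl) hbx

lemma conj_atom_tlta {Cj : Conj C} {l : Lit C} (hl : l ∈ Cj) {c : C} {Es : List (TE C)}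
    (heq : l.2 = TE.con c Es) : TE.con c Es ∈ tlta (conjTE Cj) := by
  apply tlta_foldr.2
  refine Or.inr ⟨l.2, List.mem_map.2 ⟨l, hl, rfl⟩, ?_⟩
  rw [heq]
  exact rfl

lemma posC_mem {Cj : Conj C} {ω : TE C} (h : ω ∈ posC Cj) : ∃ l ∈ Cj, l.2 = ω := by
  simp only [posC, List.mem_map, List.mem_filter] at h
  obtain ⟨l, ⟨hl, _⟩, rfl⟩ := h
  exact ⟨l, hl, rfl⟩

lemma negC_mem {Cj : Conj C} {ω : TE C} (h : ω ∈ negC Cj) : ∃ l ∈ Cj, l.2 = ω := by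
  simp only [negC, List.mem_map, List.mem_filter] at h
  obtain ⟨l, ⟨hl, _⟩, rfl⟩ := h
  exact ⟨l, hl, rfl⟩

section
variable [DecidableEq C] [DecidableEq F]

lemma incl_ec_es {ar : F → ℕ} {Δ : List (Rule C F)} {Cj : Conj C} {f : F} :
    K Δ (thTE (BCf ar Δ Cj f)) ⊆ K Δ (conjTE Cj) := by
  apply K_mono
  intro b hb
  rcases tlta_foldr.1 hb with rfl | ⟨x, hx, hbx⟩
  · exact top_mem_K
  · simp only [List.mem_flatMap, id] at hx
    obtain ⟨γ, ⟨γl, hγl, hγ⟩, hx⟩ := hx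
    rcases List.mem_append.1 hγl with hγl | hγl
    · obtain ⟨ω, hω, rfl⟩ := List.mem_map.1 hγl
      refine arules_tlta hγ hx hbx ?_
      rintro c Es rfl
      rcases List.mem_cons.1 hω with h | h
      · exact absurd h (by simp)
      · obtain ⟨l, hl, hl2⟩ := posC_mem h
        exact Rta.base (conj_atom_tlta hl hl2)
    · simp only [List.mem_flatMap, List.mem_map] at hγl
      obtain ⟨τ, hτ, γ₀, hγ₀, rfl⟩ := hγl
      simp only [pushNegSeq, List.mem_map, List.mem_range] at hγ
      obtain ⟨l₀, hl₀, rfl⟩ := hγ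
      simp only [List.mem_map, List.mem_range] at hx
      obtain ⟨i, hi, rfl⟩ := hx
      by_cases hil : i = l₀
      · simp only [hil, if_pos rfl, tlta] at hbx
        have hget : γ₀.getD l₀ .top ∈ γ₀ := by
          rw [List.getD_eq_getElem _ _ hl₀]
          exact List.getElem_mem _
        refine arules_tlta hγ₀ hget hbx ?_
        rintro c Es rfl
        obtain ⟨l, hl, hl2⟩ := negC_mem hτ
        exact Rta.base (conj_atom_tlta hl hl2)
      · simp only [if_neg hil, tlta, Set.mem_singleton_iff] at hbx
        subst hbx
        exact top_mem_K

end

lemma incl_es_esc {Δ : List (Rule C F)} {Θ : List (List (List (TE C)))}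
    {Γ : List (List (TE C))} (hΓ : Γ ∈ listProd Θ) :
    K Δ (seqTE Γ) ⊆ K Δ (thTE Θ) := by
  apply K_mono
  intro b hb
  rcases tlta_foldr.1 hb with rfl | ⟨x, hx, hbx⟩
  · exact top_mem_K
  · simp only [List.mem_flatMap, id] at hx
    obtain ⟨γ, hγ, hx⟩ := hx
    obtain ⟨D, hD, hγD⟩ := mem_of_mem_listProd hΓ γ hγ
    apply base_mem_K
    apply tlta_foldr.2
    refine Or.inr ⟨x, ?_, hbx⟩
    simp only [List.mem_flatMap, id]
    exact ⟨γ, ⟨D, hD, hγD⟩, hx⟩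

lemma incl_esc_et {Δ : List (Rule C F)} {Γ : List (List (TE C))} (j : ℕ) :
    K Δ (proj Γ j) ⊆ K Δ (seqTE Γ) := by
  apply K_mono
  intro b hb
  rcases tlta_foldr.1 hb with rfl | ⟨x, hx, hbx⟩
  · exact top_mem_K
  · obtain ⟨γ, hγ, rfl⟩ := List.mem_map.1 hx
    rcases getD_mem_or γ j .top with hd | hd
    · rw [hd] at hbx
      simp only [tlta, Set.mem_singleton_iff] at hbx
      subst hbx
      exact top_mem_K
    · apply base_mem_K
      apply tlta_foldr.2
      refine Or.inr ⟨_, ?_, hbx⟩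
      simp only [List.mem_flatMap, id]
      exact ⟨γ, hγ, hd⟩

/-! ### The decrease lemmas -/

section
variable [DecidableEq C] [DecidableEq F] [Finite C]

lemma dec_et {Δ : List (Rule C F)} {E : TE C} {Ψ : List (Conj C)} {Cj : Conj C}
    (h : Cj ∈ dnf E true) : meas Δ (.ec Cj Ψ) < meas Δ (.et E Ψ) := by
  have hsub : Uof Δ (.ec Cj Ψ) ⊆ Uof Δ (.et E Ψ) := by
    rintro a (ha | ⟨l, hl, rfl⟩)
    · exact K_conjTE_le (fun l hl => dnf_tlta E true Cj h l hl) ha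
    · exact base_mem_K (dnf_tlta E true Cj h l hl)
  have := μm_le (Uof_finite Δ (.et E Ψ)) hsub Ψ
  simp only [meas, tbl, ph]
  omega

lemma dec_ec {ar : F → ℕ} {Δ : List (Rule C F)} {Cj : Conj C} {Ψ : List (Conj C)} {f : F}
    (hns : ¬ ∃ C' ∈ Ψ, ∀ l ∈ C', l ∈ Cj) :
    meas Δ (.es (BCf ar Δ Cj f) (Cj :: Ψ)) < meas Δ (.ec Cj Ψ) := by
  have hsub : Uof Δ (.es (BCf ar Δ Cj f) (Cj :: Ψ)) ⊆ Uof Δ (.ec Cj Ψ) :=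
    fun a ha => Or.inl (incl_ec_es ha)
  have hCj : ∀ l ∈ Cj, l.2 ∈ Uof Δ (.ec Cj Ψ) := fun l hl => Or.inr ⟨l, hl, rfl⟩
  have := μm_lt (Uof_finite Δ (.ec Cj Ψ)) hsub hCj hns
  simp only [meas, tbl, ph]
  omega

lemma dec_es {Δ : List (Rule C F)} {Θ : List (List (List (TE C)))}
    {Γ : List (List (TE C))} {Ψ : List (Conj C)} (hΓ : Γ ∈ listProd Θ) :
    meas Δ (.esc Γ Ψ) < meas Δ (.es Θ Ψ) := by
  have := μm_le (Uof_finite Δ (.es Θ Ψ)) (incl_es_esc (Δ := Δ) hΓ) Ψ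
  simp only [meas, tbl, ph, Uof] at this ⊢
  omega

lemma dec_esc {Δ : List (Rule C F)} {Γ : List (List (TE C))} {Ψ : List (Conj C)} (j : ℕ) :
    meas Δ (.et (proj Γ j) Ψ) < meas Δ (.esc Γ Ψ) := by
  have := μm_le (Uof_finite Δ (.esc Γ Ψ)) (incl_esc_et (Δ := Δ) (Γ := Γ) j) Ψ
  simp only [meas, tbl, ph, Uof] at this ⊢
  omega

end

/-! ### The algorithm as a total function, by well-founded recursion -/

open Classical in
noncomputable def run [DecidableEq C] [DecidableEq F] [Finite C]
    (ar : F → ℕ) (Δ : List (Rule C F)) : Inp C → Prop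
  | .et E Ψ => ∀ Cj ∈ dnf E true, run ar Δ (.ec Cj Ψ)
  | .ec Cj Ψ =>
      if h : (∃ E ∈ posC Cj, E ∈ negC Cj) ∨ (∃ C' ∈ Ψ, ∀ l ∈ C', l ∈ Cj) then True
      else ∀ f : F, (∀ ω ∈ posC Cj, Arules ar Δ ω f ≠ []) →
        run ar Δ (.es (BCf ar Δ Cj f) (Cj :: Ψ))
  | .es Θ Ψ => ∀ Γ ∈ listProd Θ, run ar Δ (.esc Γ Ψ)
  | .esc Γ Ψ => ∃ j < (Γ.headD []).length, run ar Δ (.et (proj Γ j) Ψ)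
  termination_by x => meas Δ x
  decreasing_by
    · exact dec_et (by assumption)
    · exact dec_ec (fun hc => h (Or.inr hc))
    · exact dec_es (by assumption)
    · exact dec_esc _

section
variable [DecidableEq C] [DecidableEq F] [Finite C] (ar : F → ℕ) (Δ : List (Rule C F))

lemma run_et (E : TE C) (Ψ : List (Conj C)) :
    run ar Δ (.et E Ψ) ↔ ∀ Cj ∈ dnf E true, run ar Δ (.ec Cj Ψ) := by
  rw [run]

lemma run_ec (Cj : Conj C) (Ψ : List (Conj C)) :
    run ar Δ (.ec Cj Ψ) ↔
      ((∃ E ∈ posC Cj, E ∈ negC Cj) ∨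
       (∃ C' ∈ Ψ, ∀ l ∈ C', l ∈ Cj) ∨
       (∀ f : F, (∀ ω ∈ posC Cj, Arules ar Δ ω f ≠ []) →
          run ar Δ (.es (BCf ar Δ Cj f) (Cj :: Ψ)))) := by
  rw [run]
  split_ifs with h
  · constructor
    · intro _
      rcases h with h | h
      · exact Or.inl h
      · exact Or.inr (Or.inl h)
    · intro _; trivial
  · have hA : ¬ ∃ E ∈ posC Cj, E ∈ negC Cj := fun hh => h (Or.inl hh)
    have hB : ¬ ∃ C' ∈ Ψ, ∀ l ∈ C', l ∈ Cj := fun hh => h (Or.inr hh)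
    rw [or_iff_right hA, or_iff_right hB]

lemma run_es (Θ : List (List (List (TE C)))) (Ψ : List (Conj C)) :
    run ar Δ (.es Θ Ψ) ↔ ∀ Γ ∈ listProd Θ, run ar Δ (.esc Γ Ψ) := by
  rw [run]

lemma run_esc (Γ : List (List (TE C))) (Ψ : List (Conj C)) :
    run ar Δ (.esc Γ Ψ) ↔ ∃ j < (Γ.headD []).length, run ar Δ (.et (proj Γ j) Ψ) := by
  rw [run]

lemma run_spec :
    AlgSpec ar Δ (fun E Ψ => run ar Δ (.et E Ψ)) (fun Cj Ψ => run ar Δ (.ec Cj Ψ))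
      (fun Θ Ψ => run ar Δ (.es Θ Ψ)) (fun Γ Ψ => run ar Δ (.esc Γ Ψ)) :=
  ⟨run_et ar Δ, run_ec ar Δ, run_es ar Δ, run_esc ar Δ⟩

/-! ### Uniqueness -/

def app (fs : (TE C → List (Conj C) → Prop) × (Conj C → List (Conj C) → Prop) ×
    (List (List (List (TE C))) → List (Conj C) → Prop) ×
    (List (List (TE C)) → List (Conj C) → Prop)) : Inp C → Prop
  | .et E Ψ => fs.1 E Ψ
  | .ec Cj Ψ => fs.2.1 Cj Ψ
  | .es Θ Ψ => fs.2.2.1 Θ Ψ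
  | .esc Γ Ψ => fs.2.2.2 Γ Ψ

lemma uniq {fs₁ fs₂ : (TE C → List (Conj C) → Prop) × (Conj C → List (Conj C) → Prop) ×
      (List (List (List (TE C))) → List (Conj C) → Prop) ×
      (List (List (TE C)) → List (Conj C) → Prop)}
    (h₁ : AlgSpec ar Δ fs₁.1 fs₁.2.1 fs₁.2.2.1 fs₁.2.2.2)
    (h₂ : AlgSpec ar Δ fs₂.1 fs₂.2.1 fs₂.2.2.1 fs₂.2.2.2) :
    ∀ (n : ℕ) (x : Inp C), meas Δ x < n → (app fs₁ x ↔ app fs₂ x) := by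
  obtain ⟨he₁, hc₁, hs₁, hsc₁⟩ := h₁
  obtain ⟨he₂, hc₂, hs₂, hsc₂⟩ := h₂
  intro n
  induction n with
  | zero => intro x hx; omega
  | succ n ih =>
    intro x hx
    cases x with
    | et E Ψ =>
      simp only [app]
      rw [he₁, he₂]
      refine forall₂_congr fun Cj hCj => ih (.ec Cj Ψ) ?_
      have := dec_et (Δ := Δ) (Ψ := Ψ) hCj
      omega
    | ec Cj Ψ =>
      simp only [app]
      rw [hc₁, hc₂]
      by_cases hAB : (∃ E ∈ posC Cj, E ∈ negC Cj) ∨ (∃ C' ∈ Ψ, ∀ l ∈ C', l ∈ Cj)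
      · rcases hAB with h | h
        · exact iff_of_true (Or.inl h) (Or.inl h)
        · exact iff_of_true (Or.inr (Or.inl h)) (Or.inr (Or.inl h))
      · have hA : ¬ ∃ E ∈ posC Cj, E ∈ negC Cj := fun hh => hAB (Or.inl hh)
        have hB : ¬ ∃ C' ∈ Ψ, ∀ l ∈ C', l ∈ Cj := fun hh => hAB (Or.inr hh)
        rw [or_iff_right hA, or_iff_right hB, or_iff_right hA, or_iff_right hB]
        refine forall_congr' fun f => imp_congr_right fun _ => ih (.es (BCf ar Δ Cj f) (Cj :: Ψ)) ?_
        have := dec_ec (ar := ar) (Δ := Δ) (f := f) hB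
        omega
    | es Θ Ψ =>
      simp only [app]
      rw [hs₁, hs₂]
      refine forall₂_congr fun Γ hΓ => ih (.esc Γ Ψ) ?_
      have := dec_es (Δ := Δ) (Ψ := Ψ) hΓ
      omega
    | esc Γ Ψ =>
      simp only [app]
      rw [hsc₁, hsc₂]
      refine exists_congr fun j => and_congr_right fun _ => ih (.et (proj Γ j) Ψ) ?_
      have := dec_esc (Δ := Δ) (Γ := Γ) (Ψ := Ψ) j
      omega

end

end Term11

/-- The emptiness algorithm terminates on every input: with `Σ = F`
and `Π = C` finite and `Δ` a finite simplified arity-respecting set of type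
rules, the set `rta(E₀)` of relevant type atoms is finite for every `E₀`, every
conjunctive type expression tabled while evaluating `etype(E₀)` draws its atoms
from this finite set and the table grows strictly along each branch, so the
evaluation tree of `etype(E₀)` is finite; consequently the system of mutually
recursive defining equations of `etype`, `etype_conj`, `eseq`, `eseq_conj`
determines a unique, total quadruple of functions. -/
theorem algorithm_terminates {C F : Type} [DecidableEq C] [DecidableEq F]
    [Finite C] [Finite F] (ar : F → ℕ) (Δ : List (Rule C F))
    (harity : ∀ r ∈ Δ, r.args.length = ar r.f) :
    (∀ E₀ : TE C, {a : TE C | Rta Δ E₀ a}.Finite) ∧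
      ∃! fs : (TE C → List (Conj C) → Prop) × (Conj C → List (Conj C) → Prop) ×
          (List (List (List (TE C))) → List (Conj C) → Prop) ×
          (List (List (TE C)) → List (Conj C) → Prop),
        AlgSpec ar Δ fs.1 fs.2.1 fs.2.2.1 fs.2.2.2 := by
  classical
  constructor
  · exact fun E₀ => Term11.rta_finite Δ E₀
  · refine ⟨⟨fun E Ψ => Term11.run ar Δ (.et E Ψ), fun Cj Ψ => Term11.run ar Δ (.ec Cj Ψ),
      fun Θ Ψ => Term11.run ar Δ (.es Θ Ψ), fun Γ Ψ => Term11.run ar Δ (.esc Γ Ψ)⟩,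
      Term11.run_spec ar Δ, ?_⟩
    intro fs hfs
    obtain ⟨a, b, c, d⟩ := fs
    have key := Term11.uniq (fs₂ := (fun E Ψ => Term11.run ar Δ (.et E Ψ),
        fun Cj Ψ => Term11.run ar Δ (.ec Cj Ψ), fun Θ Ψ => Term11.run ar Δ (.es Θ Ψ),
        fun Γ Ψ => Term11.run ar Δ (.esc Γ Ψ))) ar Δ hfs (Term11.run_spec ar Δ)
    have k : ∀ x : Term11.Inp C, Term11.app (a, b, c, d) x ↔
        Term11.app (fun E Ψ => Term11.run ar Δ (.et E Ψ), fun Cj Ψ => Term11.run ar Δ (.ec Cj Ψ),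
          fun Θ Ψ => Term11.run ar Δ (.es Θ Ψ), fun Γ Ψ => Term11.run ar Δ (.esc Γ Ψ)) x :=
      fun x => key (Term11.meas Δ x + 1) x (by omega)
    simp only [Prod.mk.injEq]
    refine ⟨?_, ?_, ?_, ?_⟩
    · funext E Ψ; exact propext (k (.et E Ψ))
    · funext Cj Ψ; exact propext (k (.ec Cj Ψ))
    · funext Θ Ψ; exact propext (k (.es Θ Ψ))
    · funext Γ Ψ; exact propext (k (.esc Γ Ψ))
end
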